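/- With equal variances σ₁ = σ₂ = σ > 0 and μ₁ < μ₂, there exists a choice of Δp (namely any Δp > 0 large enough) such that P(Y_psl = -1) > P(Y_psl = 1) in the formulas of Theorem 0.1, even when γ > 1/2; i.e., logit adjustment can reverse the sampling imbalance. Precisely, lim_{Δp → ∞} P(Y_psl = 1) = 0 and lim_{Δp → ∞} P(Y_psl = -1) = 1, so for every ε > 0 there is Δp with P(Y_psl = -1) > 1 - ε and P(Y_psl = 1) < ε. -/

import Mathlib

open Real Filter MeasureTheory ProbabilityTheory

/-- The standard normal cumulative distribution function. -/
noncomputable def stdNormalCDF (x : ℝ) : ℝ :=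
  ((gaussianReal 0 1) (Set.Iic x)).toReal

lemma stdNormalCDF_eq : stdNormalCDF = cdf (gaussianReal 0 1) := by
  ext x; rw [cdf_eq_real]; rfl

lemma stdNormalCDF_tendsto_atTop : Tendsto stdNormalCDF atTop (nhds 1) := by
  rw [stdNormalCDF_eq]; exact tendsto_cdf_atTop _

lemma stdNormalCDF_tendsto_atBot : Tendsto stdNormalCDF atBot (nhds 0) := by
  rw [stdNormalCDF_eq]; exact tendsto_cdf_atBot _

theorem logit_adjustment_reverses_imbalance (γ β σ ρ μ₁ μ₂ : ℝ)
    (hγ : γ ∈ Set.Ioo (1/2 : ℝ) 1) (hβ : 0 < β) (hσ : 0 < σ)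
    (hρ : ρ ∈ Set.Ioo (1/2 : ℝ) 1) (hμ : μ₁ < μ₂)
    (P1 Pm1 : ℝ → ℝ)
    (hP1 : P1 = fun Δp : ℝ =>
      γ * stdNormalCDF (((μ₂ - μ₁) / 2 - (1 / β) * Real.log (ρ / (1 - ρ)) - Δp) / σ) +
      (1 - γ) * stdNormalCDF (((μ₁ - μ₂) / 2 - (1 / β) * Real.log (ρ / (1 - ρ)) - Δp) / σ))
    (hPm1 : Pm1 = fun Δp : ℝ =>
      (1 - γ) * stdNormalCDF (((μ₂ - μ₁) / 2 - (1 / β) * Real.log (ρ / (1 - ρ)) + Δp) / σ) +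
      γ * stdNormalCDF (((μ₁ - μ₂) / 2 - (1 / β) * Real.log (ρ / (1 - ρ)) + Δp) / σ)) :
    Tendsto P1 atTop (nhds 0) ∧ Tendsto Pm1 atTop (nhds 1) ∧
    ∀ ε > (0 : ℝ), ∃ Δp : ℝ, Pm1 Δp > 1 - ε ∧ P1 Δp < ε := by
  have hargBot : ∀ c : ℝ, Tendsto (fun Δp : ℝ => (c - Δp) / σ) atTop atBot := by
    intro c
    exact (tendsto_atBot_add_const_left _ c tendsto_neg_atTop_atBot).atBot_div_const hσ
  have hargTop : ∀ c : ℝ, Tendsto (fun Δp : ℝ => (c + Δp) / σ) atTop atTop := by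
    intro c
    exact (tendsto_atTop_add_const_left _ c tendsto_id).atTop_div_const hσ
  have h1 : Tendsto P1 atTop (nhds 0) := by
    rw [hP1]
    have := ((stdNormalCDF_tendsto_atBot.comp (hargBot ((μ₂ - μ₁) / 2 - (1 / β) * Real.log (ρ / (1 - ρ))))).const_mul γ).add
      ((stdNormalCDF_tendsto_atBot.comp (hargBot ((μ₁ - μ₂) / 2 - (1 / β) * Real.log (ρ / (1 - ρ))))).const_mul (1 - γ))
    simpa using this
  have hm1 : Tendsto Pm1 atTop (nhds 1) := by
    rw [hPm1]
    have := ((stdNormalCDF_tendsto_atTop.comp (hargTop ((μ₂ - μ₁) / 2 - (1 / β) * Real.log (ρ / (1 - ρ))))).const_mul (1 - γ)).add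
      ((stdNormalCDF_tendsto_atTop.comp (hargTop ((μ₁ - μ₂) / 2 - (1 / β) * Real.log (ρ / (1 - ρ))))).const_mul γ)
    have h : (1 - γ) * 1 + γ * 1 = 1 := by ring
    rw [h] at this
    exact this
  refine ⟨h1, hm1, ?_⟩
  intro ε hε
  have hA : ∀ᶠ Δp in atTop, Pm1 Δp > 1 - ε := by
    exact hm1.eventually (eventually_gt_nhds (by linarith))
  have hB : ∀ᶠ Δp in atTop, P1 Δp < ε := h1.eventually (eventually_lt_nhds hε)
  rcases (hA.and hB).exists with ⟨Δp, h1', h2'⟩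
  exact ⟨Δp, h1', h2'⟩
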